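/- arXiv:2003.08161 — 2 statements merged into one kernel-verified Lean document; each statement's English description precedes it below -/
import Mathlib

section
/- The speed function v does not admit a unique limit at the corner (0,1) of T: for every c ∈ [0,+∞) there exists a sequence (ρⁿ) of points of T with ρⁿ → (0,1) and v(ρⁿ) → c, and there also exists a sequence (ρⁿ) of points of T with ρⁿ → (0,1) and v(ρⁿ) → +∞. -/
open Real Filter

/-- The speed function of the Borodin-Ferrari dynamics, with the convention `v (0,0) = 0`. -/
noncomputable def speed (ρ : ℝ × ℝ) : ℝ :=
  if ρ = (0, 0) then 0
  else (1 / π) * (Real.sin (π * ρ.1) * Real.sin (π * ρ.2) / Real.sin (π * (ρ.1 + ρ.2)))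

/-- The triangle `T` on which the speed function is defined. -/
def T : Set (ℝ × ℝ) := {ρ | 0 ≤ ρ.1 ∧ 0 ≤ ρ.2 ∧ ρ.1 + ρ.2 < 1}

/-! Near the corner write `ρ = (a, 1 - a - e)` with `a, e ≥ 0` small. Since
`sin (π (1 - x)) = sin (π x)`, `v ρ = sin (π a) sin (π (a + e)) / (π sin (π e)) ~ a (a + e) / e`,
and `a (a + e) / e = a + a² / e` tends to any `c ≥ 0` when `e = a² / (c + a)`, and to `+∞`
when `e = a³`, as `a → 0`. -/

open Asymptotics Topology

lemma speed_eq (ρ : ℝ × ℝ) :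
    speed ρ = sin (π * ρ.1) * sin (π * ρ.2) / (π * sin (π * (ρ.1 + ρ.2))) := by
  unfold speed
  split_ifs with h
  · simp [h]
  · rw [mul_div_assoc', one_div_mul_eq_div, div_div]

lemma sin_eq_mul_sinc (x : ℝ) : sin x = x * sinc x := by
  rcases eq_or_ne x 0 with rfl | hx
  · simp
  · rw [sinc_of_ne_zero hx, mul_div_cancel₀ _ hx]

-- Also true at `e = 0`, where both sides are `0` by the convention `x / 0 = 0`.
lemma speed_corner_eq (a e : ℝ) :
    speed (a, 1 - a - e) =
      a * (a + e) / e * (sinc (π * a) * sinc (π * (a + e)) / sinc (π * e)) := by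
  have h₂ : sin (π * (1 - a - e)) = sin (π * (a + e)) := by
    rw [← sin_pi_sub]; ring_nf
  have h₃ : sin (π * (a + (1 - a - e))) = sin (π * e) := by
    rw [← sin_pi_sub]; ring_nf
  rw [speed_eq, h₂, h₃, sin_eq_mul_sinc (π * a), sin_eq_mul_sinc (π * (a + e)),
    sin_eq_mul_sinc (π * e)]
  field_simp [pi_ne_zero]

lemma tendsto_sinc_corner :
    Tendsto (fun p : ℝ × ℝ => sinc (π * p.1) * sinc (π * (p.1 + p.2)) / sinc (π * p.2))
      (𝓝 (0, 0)) (𝓝 1) := by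
  have : ContinuousAt
      (fun p : ℝ × ℝ => sinc (π * p.1) * sinc (π * (p.1 + p.2)) / sinc (π * p.2)) (0, 0) := by
    fun_prop (disch := simp)
  simpa using this.tendsto

lemma isEquivalent_speed_corner :
    (fun p : ℝ × ℝ => speed (p.1, 1 - p.1 - p.2)) ~[𝓝 (0, 0)]
      fun p => p.1 * (p.1 + p.2) / p.2 := by
  have hsinc := (isEquivalent_const_iff_tendsto one_ne_zero).2 tendsto_sinc_corner
  convert (IsEquivalent.refl (u := fun p : ℝ × ℝ => p.1 * (p.1 + p.2) / p.2)).mul hsinc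
    using 1 <;> funext p
  · exact speed_corner_eq p.1 p.2
  · simp

lemma corner_mem_T {a e : ℝ} (ha : 0 ≤ a) (he : 0 < e) (hae : a + e ≤ 1) :
    (a, 1 - a - e) ∈ T :=
  ⟨ha, by linarith, by linarith⟩

lemma exists_seq_T_speed_isEquivalent {a e : ℕ → ℝ} (ha : ∀ n, 0 ≤ a n) (he : ∀ n, 0 < e n)
    (hae : ∀ n, a n + e n ≤ 1) (ha₀ : Tendsto a atTop (𝓝 0)) (he₀ : Tendsto e atTop (𝓝 0)) :
    ∃ ρ : ℕ → ℝ × ℝ, (∀ n, ρ n ∈ T) ∧ Tendsto ρ atTop (𝓝 (0, 1)) ∧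
      (fun n => speed (ρ n)) ~[atTop] fun n => a n * (a n + e n) / e n := by
  refine ⟨fun n => (a n, 1 - a n - e n), fun n => corner_mem_T (ha n) (he n) (hae n), ?_,
    isEquivalent_speed_corner.comp_tendsto (ha₀.prodMk_nhds he₀)⟩
  simpa using ha₀.prodMk_nhds ((tendsto_const_nhds (x := (1 : ℝ))).sub ha₀ |>.sub he₀)

lemma exists_seq_T_tendsto_speed_nhds {t : ℕ → ℝ} (ht : ∀ n, 0 < t n)
    (ht_le : ∀ n, t n ≤ 1 / 2) (ht₀ : Tendsto t atTop (𝓝 0)) {c : ℝ} (hc : 0 ≤ c) :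
    ∃ ρ : ℕ → ℝ × ℝ, (∀ n, ρ n ∈ T) ∧ Tendsto ρ atTop (𝓝 (0, 1)) ∧
      Tendsto (fun n => speed (ρ n)) atTop (𝓝 c) := by
  -- with `e = t² / (c + t)` one gets `t (t + e) / e = c + 2 t`
  have hct : ∀ n, 0 < c + t n := fun n => by linarith [ht n]
  have he_le : ∀ n, t n ^ 2 / (c + t n) ≤ t n := fun n => by
    rw [div_le_iff₀ (hct n)]
    nlinarith [ht n]
  have he : ∀ n, 0 < t n ^ 2 / (c + t n) := fun n => div_pos (pow_pos (ht n) 2) (hct n)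
  have he₀ : Tendsto (fun n => t n ^ 2 / (c + t n)) atTop (𝓝 0) :=
    tendsto_of_tendsto_of_tendsto_of_le_of_le tendsto_const_nhds ht₀ (fun n => (he n).le) he_le
  obtain ⟨ρ, hρT, hρ, hv⟩ := exists_seq_T_speed_isEquivalent (fun n => (ht n).le) he
    (fun n => by linarith [he_le n, ht_le n]) ht₀ he₀
  refine ⟨ρ, hρT, hρ, hv.symm.tendsto_nhds ?_⟩
  have hq : ∀ n, t n * (t n + t n ^ 2 / (c + t n)) / (t n ^ 2 / (c + t n)) = c + 2 * t n :=
    fun n => by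
      field_simp [(ht n).ne', (hct n).ne']
      ring
  simpa [hq] using (ht₀.const_mul 2).const_add c

lemma exists_seq_T_tendsto_speed_atTop {t : ℕ → ℝ} (ht : ∀ n, 0 < t n)
    (ht_le : ∀ n, t n ≤ 1 / 2) (ht₀ : Tendsto t atTop (𝓝 0)) :
    ∃ ρ : ℕ → ℝ × ℝ, (∀ n, ρ n ∈ T) ∧ Tendsto ρ atTop (𝓝 (0, 1)) ∧
      Tendsto (fun n => speed (ρ n)) atTop atTop := by
  have he_le : ∀ n, t n ^ 3 ≤ t n := fun n => by
    nlinarith [ht n, ht_le n, mul_pos (ht n) (ht n)]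
  obtain ⟨ρ, hρT, hρ, hv⟩ := exists_seq_T_speed_isEquivalent (fun n => (ht n).le)
    (fun n => pow_pos (ht n) 3) (fun n => by linarith [he_le n, ht_le n]) ht₀
    (by simpa using ht₀.pow 3)
  refine ⟨ρ, hρT, hρ, hv.symm.tendsto_atTop ?_⟩
  have hq : ∀ n, t n * (t n + t n ^ 3) / t n ^ 3 = (t n)⁻¹ + t n := fun n => by
    field_simp [(ht n).ne']
  simp only [hq]
  have ht_inv : Tendsto (fun n => (t n)⁻¹) atTop atTop :=
    tendsto_inv_nhdsGT_zero.comp (tendsto_nhdsWithin_iff.2 ⟨ht₀, .of_forall ht⟩)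
  exact ht_inv.atTop_add ht₀

lemma exists_seq_pos_le_half_tendsto_zero :
    ∃ t : ℕ → ℝ, (∀ n, 0 < t n) ∧ (∀ n, t n ≤ 1 / 2) ∧ Tendsto t atTop (𝓝 0) :=
  ⟨fun n => ((n : ℝ) + 2)⁻¹, fun n => by positivity,
    fun n => by simpa using inv_anti₀ two_pos (by linarith [n.cast_nonneg (α := ℝ)]),
    tendsto_inv_atTop_zero.comp (tendsto_atTop_add_const_right _ 2 tendsto_natCast_atTop_atTop)⟩

/-- The speed function does not admit a unique limit at the corner `(0,1)` of `T`:
every value `c ∈ [0,∞)` as well as `+∞` arises as a limit along a sequence in `T`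
converging to `(0,1)`. -/
theorem stmt7 :
    (∀ c : ℝ, 0 ≤ c → ∃ ρ : ℕ → ℝ × ℝ, (∀ n, ρ n ∈ T) ∧
      Tendsto ρ atTop (nhds ((0, 1) : ℝ × ℝ)) ∧
      Tendsto (fun n => speed (ρ n)) atTop (nhds c)) ∧
    (∃ ρ : ℕ → ℝ × ℝ, (∀ n, ρ n ∈ T) ∧
      Tendsto ρ atTop (nhds ((0, 1) : ℝ × ℝ)) ∧
      Tendsto (fun n => speed (ρ n)) atTop atTop) := by
  obtain ⟨t, ht, ht_le, ht₀⟩ := exists_seq_pos_le_half_tendsto_zero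
  exact ⟨fun _ hc => exists_seq_T_tendsto_speed_nhds ht ht_le ht₀ hc,
    exists_seq_T_tendsto_speed_atTop ht ht_le ht₀⟩
end

section
/- For all real numbers a, b with |a| < 1 and b ≥ |a|, there exists a unique ρ = (ρ₁,ρ₂) ∈ T satisfying the system ρ₁ − ρ₂ = a and ρ₁ + ρ₂ + v(ρ) = b. -/
/-
On the line `ρ₁ - ρ₂ = a` write `s = ρ₁ + ρ₂`, so that `ρ ∈ T` iff `s ∈ [|a|, 1)`. Product-to-sum
turns `ρ₁ + ρ₂ + v(ρ)` into `g(s) = s + (cos πa - cos πs) / (2π sin πs)`. Then `g(|a|) = |a|`,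
`g'(s) = 1 + (1 - cos πa cos πs) / (2 sin² πs) > 0` and `g(s) → ∞` as `s → 1⁻`, so by the
intermediate value theorem and strict monotonicity `g(s) = b` has exactly one solution.
-/

open Real

open Set Filter Topology

noncomputable def ofDiffSum (a s : ℝ) : ℝ × ℝ := ((s + a) / 2, (s - a) / 2)

noncomputable def sumAddSpeed (a s : ℝ) : ℝ :=
  s + (cos (π * a) - cos (π * s)) / (2 * π * sin (π * s))

lemma sin_pi_mul_pos {s : ℝ} (h0 : 0 < s) (h1 : s < 1) : 0 < sin (π * s) :=
  sin_pos_of_pos_of_lt_pi (by positivity) (by nlinarith [pi_pos])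

lemma cos_pi_mul_abs (a : ℝ) : cos (π * |a|) = cos (π * a) := by
  rw [← abs_of_pos pi_pos, ← abs_mul, cos_abs, abs_of_pos pi_pos]

lemma speed_ofDiffSum (a s : ℝ) :
    speed (ofDiffSum a s) = (cos (π * a) - cos (π * s)) / (2 * π * sin (π * s)) := by
  unfold speed ofDiffSum
  split_ifs with h
  · obtain ⟨hs, ha⟩ := Prod.mk.injEq _ _ _ _ ▸ h
    obtain rfl : s = 0 := by linarith
    obtain rfl : a = 0 := by linarith
    simp
  · rw [cos_sub_cos, show (π * a + π * s) / 2 = π * ((s + a) / 2) by ring,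
      show (π * a - π * s) / 2 = -(π * ((s - a) / 2)) by ring, sin_neg,
      show (s + a) / 2 + (s - a) / 2 = s by ring]
    ring

lemma fst_add_snd_add_speed_ofDiffSum (a s : ℝ) :
    (ofDiffSum a s).1 + (ofDiffSum a s).2 + speed (ofDiffSum a s) = sumAddSpeed a s := by
  rw [speed_ofDiffSum, sumAddSpeed, ofDiffSum]
  ring

lemma ofDiffSum_mem_T {a s : ℝ} (hs : s ∈ Ico |a| 1) : ofDiffSum a s ∈ T := by
  obtain ⟨has, hs1⟩ := hs
  obtain ⟨h₁, h₂⟩ := abs_le.mp has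
  refine ⟨?_, ?_, ?_⟩ <;> simp only [ofDiffSum] <;> linarith

lemma exists_eq_ofDiffSum {a : ℝ} {ρ : ℝ × ℝ} (hρ : ρ ∈ T) (ha : ρ.1 - ρ.2 = a) :
    ∃ s ∈ Ico |a| 1, ρ = ofDiffSum a s := by
  obtain ⟨h₁, h₂, h₁₂⟩ := hρ
  refine ⟨ρ.1 + ρ.2, ⟨abs_le.mpr ⟨by linarith, by linarith⟩, h₁₂⟩, ?_⟩
  ext <;> simp only [ofDiffSum] <;> linarith

lemma sumAddSpeed_abs (a : ℝ) : sumAddSpeed a |a| = |a| := by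
  simp [sumAddSpeed, cos_pi_mul_abs]

/- For `a = 0` the quotient in `sumAddSpeed` is `0 / 0` at `s = 0`; Lean's value `0` is its limit,
as the half-angle form shows. -/
lemma sumAddSpeed_zero (s : ℝ) : sumAddSpeed 0 s = s + tan (π * s / 2) / (2 * π) := by
  have half_angle (y : ℝ) : (1 - cos (2 * y)) / (2 * π * sin (2 * y)) = tan y / (2 * π) := by
    rw [cos_two_mul, cos_sq', sin_two_mul, tan_eq_sin_div_cos]
    by_cases hs : sin y = 0
    · simp [hs]
    by_cases hc : cos y = 0
    · simp [hc]
    field_simp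
    ring
  rw [sumAddSpeed, mul_zero, cos_zero, ← half_angle, show 2 * (π * s / 2) = π * s by ring]

lemma hasDerivAt_sumAddSpeed (a : ℝ) {s : ℝ} (hs : sin (π * s) ≠ 0) :
    HasDerivAt (sumAddSpeed a)
      (1 + (1 - cos (π * a) * cos (π * s)) / (2 * sin (π * s) ^ 2)) s := by
  have hlin : HasDerivAt (fun x => π * x) π s := by simpa using (hasDerivAt_id s).const_mul π
  refine ((hasDerivAt_id' s).add (((hlin.cos).const_sub (cos (π * a))).div
    (hlin.sin.const_mul (2 * π)) (by positivity))).congr_deriv ?_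
  field_simp
  linear_combination sin_sq_add_cos_sq (π * s)

lemma continuousOn_sumAddSpeed {a : ℝ} (ha : |a| < 1) :
    ContinuousOn (sumAddSpeed a) (Ico |a| 1) := by
  rcases eq_or_ne a 0 with rfl | ha0
  · simp_rw [funext sumAddSpeed_zero, tan_eq_sin_div_cos]
    refine continuousOn_id.add ((ContinuousOn.div (by fun_prop) (by fun_prop) ?_).div_const _)
    intro s hs
    rw [abs_zero] at hs
    exact (cos_pos_of_mem_Ioo ⟨by nlinarith [pi_pos, hs.1], by nlinarith [pi_pos, hs.2]⟩).ne'
  · refine continuousOn_id.add (ContinuousOn.div (by fun_prop) (by fun_prop) ?_)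
    intro s hs
    have := sin_pi_mul_pos ((abs_pos.mpr ha0).trans_le hs.1) hs.2
    positivity

lemma strictMonoOn_sumAddSpeed {a : ℝ} (ha : |a| < 1) :
    StrictMonoOn (sumAddSpeed a) (Ico |a| 1) := by
  refine strictMonoOn_of_deriv_pos (convex_Ico _ _) (continuousOn_sumAddSpeed ha) ?_
  intro s hs
  rw [interior_Ico] at hs
  have hsin := sin_pi_mul_pos ((abs_nonneg a).trans_lt hs.1) hs.2
  rw [(hasDerivAt_sumAddSpeed a hsin.ne').deriv]
  have hcos : cos (π * a) * cos (π * s) ≤ 1 := by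
    refine (le_abs_self _).trans ?_
    rw [abs_mul]
    exact mul_le_one₀ (abs_cos_le_one _) (abs_nonneg _) (abs_cos_le_one _)
  exact add_pos_of_pos_of_nonneg one_pos (div_nonneg (by linarith) (by positivity))

lemma tendsto_sumAddSpeed_atTop {a : ℝ} (ha : |a| < 1) :
    Tendsto (sumAddSpeed a) (𝓝[<] 1) atTop := by
  have hnum : Tendsto (fun s => cos (π * a) - cos (π * s)) (𝓝[<] 1) (𝓝 (cos (π * a) + 1)) := by
    refine ((Continuous.tendsto' (by fun_prop) 1 _ ?_)).mono_left nhdsWithin_le_nhds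
    rw [mul_one, cos_pi, sub_neg_eq_add]
  have hden : Tendsto (fun s => 2 * π * sin (π * s)) (𝓝[<] 1) (𝓝[>] 0) := by
    refine tendsto_nhdsWithin_iff.mpr ⟨(Continuous.tendsto' (by fun_prop) 1 _ (by simp)).mono_left
      nhdsWithin_le_nhds, ?_⟩
    filter_upwards [Ioo_mem_nhdsLT zero_lt_one] with s hs
    have := sin_pi_mul_pos hs.1 hs.2
    exact mem_Ioi.mpr (by positivity)
  have hcos : 0 < cos (π * a) + 1 := by
    have := cos_lt_cos_of_nonneg_of_le_pi (x := π * |a|) (y := π) (by positivity) le_rfl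
      (by nlinarith [pi_pos])
    rw [cos_pi_mul_abs, cos_pi] at this
    linarith
  exact (tendsto_nhdsWithin_of_tendsto_nhds continuousAt_id.tendsto).add_atTop
    (hnum.pos_mul_atTop hcos (tendsto_inv_nhdsGT_zero.comp hden))

lemma exists_sumAddSpeed_eq {a b : ℝ} (ha : |a| < 1) (hb : |a| ≤ b) :
    ∃ s ∈ Ico |a| 1, sumAddSpeed a s = b := by
  obtain ⟨t, hbt, ht⟩ :=
    (((tendsto_sumAddSpeed_atTop ha).eventually_gt_atTop b).and (Ioo_mem_nhdsLT ha)).exists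
  obtain ⟨s, hs, hsb⟩ := intermediate_value_Icc ht.1.le
    ((continuousOn_sumAddSpeed ha).mono (Icc_subset_Ico_right ht.2))
    ⟨(sumAddSpeed_abs a).trans_le hb, hbt.le⟩
  exact ⟨s, ⟨hs.1, hs.2.trans_lt ht.2⟩, hsb⟩

/-- For all `a, b` with `|a| < 1` and `b ≥ |a|`, there is a unique `ρ ∈ T` with
`ρ₁ - ρ₂ = a` and `ρ₁ + ρ₂ + v(ρ) = b`. -/
theorem stmt9 (a b : ℝ) (ha : |a| < 1) (hb : |a| ≤ b) :
    ∃! ρ : ℝ × ℝ, ρ ∈ T ∧ ρ.1 - ρ.2 = a ∧ ρ.1 + ρ.2 + speed ρ = b := by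
  obtain ⟨s, hs, hsb⟩ := exists_sumAddSpeed_eq ha hb
  refine ⟨ofDiffSum a s, ⟨ofDiffSum_mem_T hs, by simp only [ofDiffSum]; ring,
    (fst_add_snd_add_speed_ofDiffSum a s).trans hsb⟩, ?_⟩
  rintro ρ ⟨hρT, hρa, hρb⟩
  obtain ⟨t, ht, rfl⟩ := exists_eq_ofDiffSum hρT hρa
  rw [fst_add_snd_add_speed_ofDiffSum] at hρb
  rw [(strictMonoOn_sumAddSpeed ha).injOn ht hs (hρb.trans hsb.symm)]
end
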